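/- arXiv:1912.04253 — 3 statements merged into one kernel-verified Lean document; each statement's English description precedes it below -/
import Mathlib

section
/- The Baer-type action of extensions on variegated extensions is well defined: the morphisms a⁺ : F ⟶ W + 𝐗 and b⁺ : W + 𝐗 ⟶ E exist as described (i.e., (a, 0) : F ⟶ W ⊕ X factors through the pullback V, and b composed with the first projection V ⟶ W descends to the cokernel W + 𝐗), and the triple (W + 𝐗, a⁺, b⁺) is a variegated extension of 𝐄 by 𝐅. -/
open CategoryTheory Category Limits

universe w v u

/-- The ambient data: an abelian category `C` together with two short exact sequences
`𝐅 : 0 → P →[ι] F →[π] R → 0` and `𝐄 : 0 → R →[κ] E →[ρ] Q → 0`. -/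
structure VarSetup (C : Type u) [Category.{v} C] [Abelian C] where
  P : C
  R : C
  Q : C
  F : C
  E : C
  ι : P ⟶ F
  π : F ⟶ R
  κ : R ⟶ E
  ρ : E ⟶ Q
  wF : ι ≫ π = 0
  seF : (ShortComplex.mk ι π wF).ShortExact
  wE : κ ≫ ρ = 0
  seE : (ShortComplex.mk κ ρ wE).ShortExact

variable {C : Type u} [Category.{v} C] [Abelian C]

/-- `(W, a, b)` is a variegated extension of `𝐄` by `𝐅`: (i) `b ∘ a = κ ∘ π`,
(ii) `0 → P →[a∘ι] W →[b] E → 0` is short exact, and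
(iii) `0 → F →[a] W →[ρ∘b] Q → 0` is short exact. -/
structure IsVarExt (S : VarSetup C) {W : C} (a : S.F ⟶ W) (b : W ⟶ S.E) : Prop where
  comm : a ≫ b = S.π ≫ S.κ
  w1 : (S.ι ≫ a) ≫ b = 0
  se1 : (ShortComplex.mk (S.ι ≫ a) b w1).ShortExact
  w2 : a ≫ (b ≫ S.ρ) = 0
  se2 : (ShortComplex.mk a (b ≫ S.ρ) w2).ShortExact

/-- A variegated extension of `𝐄` by `𝐅`, bundled. -/
structure VarExt (S : VarSetup C) where
  W : C
  a : S.F ⟶ W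
  b : W ⟶ S.E
  isVarExt : IsVarExt S a b

/-- An extension of `Q` by `P`: a short exact sequence `0 → P →[α] X →[β] Q → 0`. -/
structure Extension (P Q : C) where
  X : C
  α : P ⟶ X
  β : X ⟶ Q
  w : α ≫ β = 0
  se : (ShortComplex.mk α β w).ShortExact

section Plus

variable (S : VarSetup C) {W : C} (a : S.F ⟶ W) (b : W ⟶ S.E)
  (h1 : (S.ι ≫ a) ≫ b = 0) (h2 : a ≫ (b ≫ S.ρ) = 0)
  {X : C} (α : S.P ⟶ X) (β : X ⟶ S.Q) (hw : α ≫ β = 0)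

/-- The morphism `P ⟶ V` into the pullback `V` of `(ρ∘b) ⊕ β : W ⊕ X ⟶ Q ⊕ Q`
along the diagonal `Q ⟶ Q ⊕ Q` (i.e. the fibre product of `ρ∘b` and `β` over `Q`),
with components `a∘ι : P ⟶ W` and `−α : P ⟶ X`. -/
noncomputable def plusKer : S.P ⟶ pullback (b ≫ S.ρ) β :=
  pullback.lift (S.ι ≫ a) (-α)
    (by rw [Category.assoc, h2, comp_zero, Preadditive.neg_comp, hw, neg_zero])

/-- `W + 𝐗`, the cokernel of `plusKer : P ⟶ V`. -/
noncomputable def plusW : C := cokernel (plusKer S a b h2 α β hw)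

/-- `a⁺ : F ⟶ W + 𝐗`, induced by `(a, 0) : F ⟶ V`. -/
noncomputable def plusA : S.F ⟶ plusW S a b h2 α β hw :=
  pullback.lift a 0 (by rw [h2, zero_comp]) ≫ cokernel.π _

/-- `b⁺ : W + 𝐗 ⟶ E`, induced by `b` composed with the first projection `V ⟶ W`. -/
noncomputable def plusB : plusW S a b h2 α β hw ⟶ S.E :=
  cokernel.desc _ (pullback.fst (b ≫ S.ρ) β ≫ b) (by
    rw [← Category.assoc,
      show plusKer S a b h2 α β hw ≫ pullback.fst (b ≫ S.ρ) β = S.ι ≫ a from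
        pullback.lift_fst _ _ _, h1])

end Plus

/-!
The pullback `V` is an extension of `X` by `F`, via `(a, 0)` and the second projection, and an
extension of `W` by `P`, via `(0, α)` and the first projection. The copy of `P` embedded by
`(a ∘ ι, -α)` meets both kernels trivially, and each projection maps it onto the subobject `P`
of `X`, resp. of `W`, that is the kernel of `β`, resp. of `b`. Dividing it out therefore turns
these two extensions into the sequences (iii) and (ii) for `W + 𝐗`.
-/

namespace CategoryTheory.ShortComplex

variable {A B D : C} {f : A ⟶ B} {g : B ⟶ D} {w : f ≫ g = 0}

lemma ShortExact.neg_f (h : (ShortComplex.mk f g w).ShortExact) :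
    (ShortComplex.mk (-f) g (by rw [Preadditive.neg_comp, w, neg_zero])).ShortExact :=
  shortExact_of_iso (isoMk (-Iso.refl A) (Iso.refl B) (Iso.refl D)) h

/-- `V / k(B)` is an extension of `Z` by `A`: the kernel of `V → Z` is `A ⊕ k(B)`. -/
lemma ShortExact.cokernel_shortExact {V Y Z : C} {i : A ⟶ V} {p : V ⟶ Y} {wi : i ≫ p = 0}
    (hV : (ShortComplex.mk i p wi).ShortExact) {k : B ⟶ V} {e : B ⟶ Y} {h : Y ⟶ Z}
    {we : e ≫ h = 0} (hB : (ShortComplex.mk e h we).ShortExact) (hk : k ≫ p = e)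
    {j : A ⟶ cokernel k} {q : cokernel k ⟶ Z} (hj : i ≫ cokernel.π k = j) (hq : cokernel.π k ≫ q = p ≫ h)
    (w : j ≫ q = 0) : (ShortComplex.mk j q w).ShortExact := by
  subst hj hk
  have := hV.mono_f
  have := hV.epi_g
  have := hB.mono_f
  have := hB.epi_g
  refine { exact := ?_, mono_f := ?_, epi_g := epi_of_epi_fac hq }
  · rw [exact_iff_exact_up_to_refinements]
    intro T x hx
    obtain ⟨T₁, π₁, _, v, hv⟩ := surjective_up_to_refinements_of_epi (cokernel.π k) x
    have hvh : v ≫ p ≫ h = 0 := by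
      rw [← hq, ← assoc, ← hv, assoc]
      simp [show x ≫ q = 0 from hx]
    obtain ⟨T₂, π₂, _, y, hy⟩ := hB.exact.exact_up_to_refinements (v ≫ p) (by simpa using hvh)
    obtain ⟨T₃, π₃, _, z, hz⟩ := hV.exact.exact_up_to_refinements (π₂ ≫ v - y ≫ k) (by
      dsimp at hy ⊢
      rw [Preadditive.sub_comp, assoc, hy, assoc, sub_self])
    refine ⟨T₃, π₃ ≫ π₂ ≫ π₁, inferInstance, z, ?_⟩
    dsimp at hz ⊢
    calc (π₃ ≫ π₂ ≫ π₁) ≫ x = π₃ ≫ (π₂ ≫ v - y ≫ k) ≫ cokernel.π k := by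
          simp [Preadditive.sub_comp, hv]
      _ = z ≫ i ≫ cokernel.π k := by rw [reassoc_of% hz]
  · refine Preadditive.mono_of_cancel_zero _ fun x hx => ?_
    rw [← assoc] at hx
    obtain ⟨T, π, _, y, hy⟩ :=
      (CokernelCofork.IsColimit.comp_π_eq_zero_iff_up_to_refinements (cokernelIsCokernel k)
        (x ≫ i)).1 hx
    have hy0 : y = 0 := by
      rw [← cancel_mono (k ≫ p), ← assoc, ← hy]
      simp [wi]
    rw [hy0, zero_comp, ← assoc] at hy
    rw [← cancel_epi π, ← cancel_mono i, hy]
    simp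

end CategoryTheory.ShortComplex

namespace CategoryTheory.IsPullback

variable {V W X Q F : C} {fst : V ⟶ W} {snd : V ⟶ X} {f : W ⟶ Q} {g : X ⟶ Q}

lemma shortExact_snd (hpb : IsPullback fst snd f g) {a : F ⟶ W} {w : a ≫ f = 0}
    (hS : (ShortComplex.mk a f w).ShortExact) {l : F ⟶ V} (hl₁ : l ≫ fst = a)
    (hl₂ : l ≫ snd = 0) : (ShortComplex.mk l snd hl₂).ShortExact := by
  have := hS.mono_f
  have := hS.epi_g
  have : Epi snd := Abelian.epi_snd_of_isLimit f g hpb.isLimit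
  refine { exact := ?_, mono_f := mono_of_mono_fac hl₁, epi_g := this }
  rw [ShortComplex.exact_iff_exact_up_to_refinements]
  intro T x hx
  obtain ⟨T', π, _, y, hy⟩ := hS.exact.exact_up_to_refinements (x ≫ fst)
    (by simp [hpb.w, reassoc_of% (show x ≫ snd = 0 from hx)])
  refine ⟨T', π, inferInstance, y, hpb.hom_ext ?_ ?_⟩
  · simpa [hl₁] using hy
  · simp [hl₂, show x ≫ snd = 0 from hx]

end CategoryTheory.IsPullback

section Plus

variable (S : VarSetup C) {W : C} {a : S.F ⟶ W} {b : W ⟶ S.E} (h2 : a ≫ (b ≫ S.ρ) = 0)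
  {X : C} {α : S.P ⟶ X} {β : X ⟶ S.Q} (hw : α ≫ β = 0)

lemma plusKer_fst : plusKer S a b h2 α β hw ≫ pullback.fst (b ≫ S.ρ) β = S.ι ≫ a :=
  pullback.lift_fst _ _ _

lemma plusKer_snd : plusKer S a b h2 α β hw ≫ pullback.snd (b ≫ S.ρ) β = -α :=
  pullback.lift_snd _ _ _

lemma ι_plusA : S.ι ≫ plusA S a b h2 α β hw =
    pullback.lift 0 α (by rw [zero_comp, hw]) ≫ cokernel.π (plusKer S a b h2 α β hw) := by
  have hsplit : S.ι ≫ pullback.lift a 0 (by rw [h2, zero_comp]) =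
      pullback.lift 0 α (by rw [zero_comp, hw]) + plusKer S a b h2 α β hw := by
    apply pullback.hom_ext
    · rw [assoc, pullback.lift_fst, Preadditive.add_comp, pullback.lift_fst, plusKer_fst, zero_add]
    · rw [assoc, pullback.lift_snd, Preadditive.add_comp, pullback.lift_snd, plusKer_snd,
        comp_zero, add_neg_cancel]
  show S.ι ≫ pullback.lift a 0 _ ≫ cokernel.π _ = _
  rw [← assoc, hsplit, Preadditive.add_comp, cokernel.condition, add_zero]

lemma plusA_plusB (h1 : (S.ι ≫ a) ≫ b = 0) :
    plusA S a b h2 α β hw ≫ plusB S a b h1 h2 α β hw = a ≫ b := by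
  show (pullback.lift a 0 _ ≫ cokernel.π _) ≫ cokernel.desc _ _ _ = _
  rw [assoc, cokernel.π_desc, pullback.lift_fst_assoc]

lemma π_plusB_ρ (h1 : (S.ι ≫ a) ≫ b = 0) :
    cokernel.π (plusKer S a b h2 α β hw) ≫ plusB S a b h1 h2 α β hw ≫ S.ρ =
      pullback.snd (b ≫ S.ρ) β ≫ β := by
  simp [plusB, pullback.condition]

end Plus

/-- The Baer-type action of extensions on variegated extensions is well defined:
the morphisms `a⁺` and `b⁺` exist as described (witnessed by the definitions above,
with `plusKer` a monomorphism), and `(W + 𝐗, a⁺, b⁺)` is a variegated extension of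
`𝐄` by `𝐅`. -/
theorem baer_action_well_defined (S : VarSetup C) (V : VarExt S) (X : Extension S.P S.Q) :
    Mono (plusKer S V.a V.b V.isVarExt.w2 X.α X.β X.w) ∧
    IsVarExt S (plusA S V.a V.b V.isVarExt.w2 X.α X.β X.w)
      (plusB S V.a V.b V.isVarExt.w1 V.isVarExt.w2 X.α X.β X.w) := by
  obtain ⟨W, a, b, hV⟩ := V
  obtain ⟨X, α, β, hw, hX⟩ := X
  have := hV.se1.mono_f
  have hpb := IsPullback.of_hasPullback (b ≫ S.ρ) β
  have comm : plusA S a b hV.w2 α β hw ≫ plusB S a b hV.w1 hV.w2 α β hw = S.π ≫ S.κ :=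
    (plusA_plusB S hV.w2 hw hV.w1).trans hV.comm
  refine ⟨mono_of_mono_fac (plusKer_fst S hV.w2 hw), ?_⟩
  exact
    { comm
      w1 := by rw [assoc, comm, ← assoc, S.wF, zero_comp]
      se1 := (hpb.flip.shortExact_snd hX (pullback.lift_snd _ _ _) (pullback.lift_fst _ _ _)
        ).cokernel_shortExact hV.se1 (plusKer_fst S hV.w2 hw) (ι_plusA S hV.w2 hw).symm
        (cokernel.π_desc _ _ _) _
      w2 := by rw [← assoc, comm, assoc, S.wE, comp_zero]
      se2 := (hpb.shortExact_snd hV.se2 (pullback.lift_fst _ _ _) (pullback.lift_snd _ _ _)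
        ).cokernel_shortExact hX.neg_f (plusKer_snd S hV.w2 hw) rfl
        (π_plusB_ρ S hV.w2 hw hV.w1) _ }
end

section
/- The difference of two variegated extensions is a well-defined extension: the indicated morphisms P ⟶ W′ − W and W′ − W ⟶ Q exist (i.e., (a∘ι, 0) : P ⟶ W ⊕ W′ factors through the pullback V′ and its composite with the cokernel projection is a monomorphism, and ρ∘b composed with the first projection V′ ⟶ W descends to W′ − W), and the sequence 0 → P → (W′ − W) → Q → 0 is short exact, so that W′ − W is an extension of Q by P. -/
open CategoryTheory Category Limits

universe w v u

variable {C : Type u} [Category.{v} C] [Abelian C]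

section Diff

variable (S : VarSetup C) {W W' : C} (a : S.F ⟶ W) (b : W ⟶ S.E)
  (a' : S.F ⟶ W') (b' : W' ⟶ S.E)
  (hc : a ≫ b = S.π ≫ S.κ) (hc' : a' ≫ b' = S.π ≫ S.κ)
  (h1 : (S.ι ≫ a) ≫ b = 0) (h2 : a ≫ (b ≫ S.ρ) = 0)

/-- The morphism `F ⟶ V′` into the pullback `V′` of `b ⊕ b′ : W ⊕ W′ ⟶ E ⊕ E` along
the diagonal `E ⟶ E ⊕ E` (i.e. the fibre product of `b` and `b′` over `E`),
with components `a : F ⟶ W` and `a′ : F ⟶ W′`. -/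
noncomputable def diffKer : S.F ⟶ pullback b b' :=
  pullback.lift a a' (by rw [hc, hc'])

/-- `W′ − W`, the cokernel of `diffKer : F ⟶ V′`. -/
noncomputable def diffW : C := cokernel (diffKer S a b a' b' hc hc')

/-- The morphism `P ⟶ W′ − W` induced by `(a∘ι, 0) : P ⟶ V′`. -/
noncomputable def diffP : S.P ⟶ diffW S a b a' b' hc hc' :=
  pullback.lift (S.ι ≫ a) 0 (by rw [h1, zero_comp]) ≫ cokernel.π _

/-- The morphism `W′ − W ⟶ Q` induced by `ρ∘b` composed with the first
projection `V′ ⟶ W`. -/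
noncomputable def diffQ : diffW S a b a' b' hc hc' ⟶ S.Q :=
  cokernel.desc _ (pullback.fst b b' ≫ b ≫ S.ρ) (by
    rw [← Category.assoc,
      show diffKer S a b a' b' hc hc' ≫ pullback.fst b b' = a from pullback.lift_fst _ _ _,
      h2])

lemma diff_w : diffP S a b a' b' hc hc' h1 ≫ diffQ S a b a' b' hc hc' h2 = 0 := by
  dsimp only [diffP, diffQ, diffW]
  rw [Category.assoc, cokernel.π_desc, ← Category.assoc, pullback.lift_fst,
    Category.assoc]
  rw [show a ≫ b ≫ S.ρ = 0 from h2, comp_zero]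

end Diff

/-! The fibre product `V′ = W ×_E W′` is the pullback of `0 → P → W → E → 0` along `b′`, so
`0 → P → V′ → W′ → 0` is short exact, the first map being `(a ∘ ι, 0)` and the second the
projection. The map `F → V′` followed by this projection is `a′`, a monomorphism with cokernel
`Q`; dividing the middle term by `F` therefore yields `0 → P → W′ − W → Q → 0`. The map to `Q`
induced by `ρ ∘ b′ ∘ snd` is the one induced by `ρ ∘ b ∘ fst`, since `b ∘ fst = b′ ∘ snd`. -/

namespace CategoryTheory.ShortComplex.ShortExact

variable {X₁ X₂ X₃ X₄ : C}

lemma pullback {f : X₁ ⟶ X₂} {g : X₂ ⟶ X₃} {w : f ≫ g = 0}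
    (hS : (ShortComplex.mk f g w).ShortExact) (t : X₄ ⟶ X₃) :
    (ShortComplex.mk (pullback.lift f 0 (by rw [w, zero_comp]) : X₁ ⟶ pullback g t)
      (pullback.snd g t) (pullback.lift_snd _ _ _)).ShortExact := by
  have := hS.mono_f
  have := hS.epi_g
  refine .mk' ?_ (mono_of_mono_fac (pullback.lift_fst _ _ _)) inferInstance
  rw [exact_iff_exact_up_to_refinements]
  intro T x hx
  obtain ⟨T', π, hπ, y, hy⟩ := hS.exact.exact_up_to_refinements (x ≫ pullback.fst g t) (by
    simp only [assoc, pullback.condition, reassoc_of% hx, zero_comp])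
  refine ⟨T', π, hπ, y, pullback.hom_ext ?_ ?_⟩
  · rw [assoc, assoc, pullback.lift_fst]
    exact hy
  · rw [assoc, assoc, pullback.lift_snd, comp_zero, hx, comp_zero]

lemma cokernel {F : C} {f : X₁ ⟶ X₂} {g : X₂ ⟶ X₃} {w : f ≫ g = 0}
    (hS : (ShortComplex.mk f g w).ShortExact) {k : F ⟶ X₂} {a : F ⟶ X₃} (fac : k ≫ g = a)
    {h : X₃ ⟶ X₄} {w' : a ≫ h = 0} (hT : (ShortComplex.mk a h w').ShortExact)
    {φ : cokernel k ⟶ X₄} (hφ : cokernel.π k ≫ φ = g ≫ h) :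
    (ShortComplex.mk (f ≫ cokernel.π k) φ
      (by rw [assoc, hφ, reassoc_of% w, zero_comp])).ShortExact := by
  subst fac
  have := hS.mono_f
  have := hS.epi_g
  have := hT.mono_f
  have := hT.epi_g
  have hk : (ShortComplex.mk k (cokernel.π k) (cokernel.condition k)).Exact :=
    exact_of_g_is_cokernel _ (cokernelIsCokernel k)
  refine .mk' ?_ ?_ (epi_of_epi_fac hφ)
  · rw [exact_iff_exact_up_to_refinements]
    intro T z hz
    obtain ⟨T₁, π₁, _, u, hu⟩ := surjective_up_to_refinements_of_epi (cokernel.π k) z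
    obtain ⟨T₂, π₂, _, y, hy⟩ := hT.exact.exact_up_to_refinements (u ≫ g) (by
      simpa only [assoc, hφ, hz, comp_zero] using hu.symm =≫ φ)
    obtain ⟨T₃, π₃, _, x, hx⟩ := hS.exact.exact_up_to_refinements (π₂ ≫ u - y ≫ k) (by
      simpa [sub_eq_zero] using hy)
    refine ⟨T₃, π₃ ≫ π₂ ≫ π₁, inferInstance, x, ?_⟩
    simpa [hu] using hx =≫ cokernel.π k
  · rw [Preadditive.mono_iff_cancel_zero]
    intro T x hx
    obtain ⟨T₁, π₁, _, y, hy⟩ := hk.exact_up_to_refinements (x ≫ f) (by simpa using hx)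
    obtain rfl : y = 0 := zero_of_comp_mono (k ≫ g) (by simpa [w] using (hy =≫ g).symm)
    rw [← cancel_epi π₁, comp_zero]
    exact zero_of_comp_mono f (by simpa using hy)

end CategoryTheory.ShortComplex.ShortExact

/-- The difference of two variegated extensions is a well-defined extension of `Q` by `P`:
the indicated morphisms `P ⟶ W′ − W` and `W′ − W ⟶ Q` exist (witnessed by the definitions
above), and `0 → P → (W′ − W) → Q → 0` is short exact (in particular `P ⟶ W′ − W`
is a monomorphism). -/
theorem diff_is_extension (S : VarSetup C) (V V' : VarExt S) :
    (ShortComplex.mk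
      (diffP S V.a V.b V'.a V'.b V.isVarExt.comm V'.isVarExt.comm V.isVarExt.w1)
      (diffQ S V.a V.b V'.a V'.b V.isVarExt.comm V'.isVarExt.comm V.isVarExt.w2)
      (diff_w S V.a V.b V'.a V'.b V.isVarExt.comm V'.isVarExt.comm V.isVarExt.w1
        V.isVarExt.w2)).ShortExact :=
  (V.isVarExt.se1.pullback V'.b).cokernel (pullback.lift_snd _ _ _)
    V'.isVarExt.se2 ((cokernel.π_desc _ _ _).trans (pullback.condition_assoc _))
end

section
/- Two variegated extensions (W, a, b) and (W′, a′, b′) of 𝐄 by 𝐅 are isomorphic as variegated extensions if and only if their difference W′ − W is isomorphic, as an extension of Q by P, to the split extension 0 → P → P ⊕ Q → Q → 0. -/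
/-!
Put `V = W ×_E W'`. As `b'` is an epimorphism with kernel `ι ≫ a'`, the first projection
`V ⟶ W` is a cokernel of `(0, ι ≫ a') : P ⟶ V`, and in `W' − W = V / F` this map becomes
`-diffP`, because `(0, ι ≫ a') + (ι ≫ a, 0)` is the image of `ι` under `(a, a') : F ⟶ V`.
Hence a morphism `m : W ⟶ W'` of variegated extensions and a retraction `r` of `diffP`
determine each other through `fst ≫ m - snd = π ≫ r ≫ ι ≫ a'` (with `π : V ⟶ W' − W`).
Every morphism of variegated extensions is an isomorphism by the five lemma, and an
extension is isomorphic to the split one exactly when its first map has a retraction.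
-/

open CategoryTheory Category Limits

universe w v u

variable {C : Type u} [Category.{v} C] [Abelian C]

/-- Two extension data `(X, α, β)` and `(X′, α′, β′)` of `Q` by `P` are isomorphic:
there is an isomorphism of the middle objects commuting with the maps from `P` and to `Q`. -/
def ExtDataIso {P Q X X' : C} (α : P ⟶ X) (β : X ⟶ Q) (α' : P ⟶ X') (β' : X' ⟶ Q) : Prop :=
  ∃ e : X ≅ X', α ≫ e.hom = α' ∧ e.hom ≫ β' = β

/-- Two variegated extension data `(W, a, b)` and `(W′, a′, b′)` of `𝐄` by `𝐅` are
isomorphic as variegated extensions. -/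
def VarDataIso (S : VarSetup C) {W W' : C} (a : S.F ⟶ W) (b : W ⟶ S.E)
    (a' : S.F ⟶ W') (b' : W' ⟶ S.E) : Prop :=
  ∃ e : W ≅ W', a ≫ e.hom = a' ∧ e.hom ≫ b' = b

namespace CategoryTheory.ShortComplex

lemma isIso_of_shortExact_of_comp {X₁ X₂ X₂' X₃ : C} {f : X₁ ⟶ X₂} {g : X₂ ⟶ X₃}
    {f' : X₁ ⟶ X₂'} {g' : X₂' ⟶ X₃} {w : f ≫ g = 0} {w' : f' ≫ g' = 0}
    (hS : (mk f g w).ShortExact) (hS' : (mk f' g' w').ShortExact)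
    (m : X₂ ⟶ X₂') (hf : f ≫ m = f') (hg : m ≫ g' = g) : IsIso m :=
  isIso₂_of_shortExact_of_isIso₁₃' (S₁ := mk f g w) (S₂ := mk f' g' w')
    ⟨𝟙 _, m, 𝟙 _, by dsimp; rw [id_comp, hf], by dsimp; rw [comp_id, hg]⟩ hS hS'
    inferInstance inferInstance

lemma shortExact_pullback_fst {P W W' E : C} (b : W ⟶ E) {k : P ⟶ W'} {b' : W' ⟶ E}
    {w : k ≫ b' = 0} (hS : (mk k b' w).ShortExact) :
    (mk (pullback.lift 0 k (by simp [w]) : P ⟶ pullback b b') (pullback.fst b b')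
      (pullback.lift_fst _ _ _)).ShortExact := by
  have := hS.mono_f
  have := hS.epi_g
  have : Mono (pullback.lift 0 k (by simp [w]) : P ⟶ pullback b b') :=
    mono_of_mono_fac (pullback.lift_snd _ _ _)
  refine { exact := exact_of_f_is_kernel _ (KernelFork.IsLimit.ofι' _ _ fun x hx => ?_) }
  have hx' : (x ≫ pullback.snd b b') ≫ b' = 0 := by
    rw [assoc, ← pullback.condition, reassoc_of% hx, zero_comp]
  refine ⟨hS.exact.lift _ hx', pullback.hom_ext ?_ ?_⟩
  · simpa [pullback.lift_fst] using hx.symm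
  · simpa [pullback.lift_snd] using hS.exact.lift_f _ hx'

lemma extDataIso_biprod_iff_exists_retraction {P X Q : C} {f : P ⟶ X} {g : X ⟶ Q}
    {w : f ≫ g = 0} (hS : (mk f g w).Exact) [Epi g] :
    ExtDataIso f g biprod.inl biprod.snd ↔ ∃ r : X ⟶ P, f ≫ r = 𝟙 P := by
  constructor
  · rintro ⟨e, he, -⟩
    exact ⟨e.hom ≫ biprod.fst, by simp [reassoc_of% he]⟩
  · rintro ⟨r, hr⟩
    let s := Splitting.ofExactOfRetraction _ hS r hr ‹_›
    exact ⟨s.isoBinaryBiproduct, by ext <;> simp [s.f_r, w], by simp⟩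

end CategoryTheory.ShortComplex

open ShortComplex

namespace VarExt

variable {S : VarSetup C} (V V' : VarExt S)

instance : Epi V.b := V.isVarExt.se1.epi_g
instance : Mono (S.ι ≫ V.a) := V.isVarExt.se1.mono_f
instance : Epi (V.b ≫ S.ρ) := V.isVarExt.se2.epi_g

lemma varDataIso_iff_exists_hom :
    VarDataIso S V.a V.b V'.a V'.b ↔ ∃ m : V.W ⟶ V'.W, V.a ≫ m = V'.a ∧ m ≫ V'.b = V.b := by
  refine ⟨fun ⟨e, ha, hb⟩ => ⟨e.hom, ha, hb⟩, fun ⟨m, ha, hb⟩ => ?_⟩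
  have := isIso_of_shortExact_of_comp V.isVarExt.se1 V'.isVarExt.se1 m
    (by rw [assoc, ha]) hb
  exact ⟨asIso m, ha, hb⟩

local notation "δK" => diffKer S V.a V.b V'.a V'.b V.isVarExt.comm V'.isVarExt.comm
local notation "δP" => diffP S V.a V.b V'.a V'.b V.isVarExt.comm V'.isVarExt.comm V.isVarExt.w1
local notation "δQ" => diffQ S V.a V.b V'.a V'.b V.isVarExt.comm V'.isVarExt.comm V.isVarExt.w2

noncomputable def inlP : S.P ⟶ pullback V.b V'.b :=
  pullback.lift (S.ι ≫ V.a) 0 (by rw [V.isVarExt.w1, zero_comp])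

noncomputable def inrP : S.P ⟶ pullback V.b V'.b :=
  pullback.lift 0 (S.ι ≫ V'.a) (by rw [V'.isVarExt.w1, zero_comp])

@[simp] lemma diffKer_fst : δK ≫ pullback.fst V.b V'.b = V.a := pullback.lift_fst _ _ _
@[simp] lemma diffKer_snd : δK ≫ pullback.snd V.b V'.b = V'.a := pullback.lift_snd _ _ _
@[simp] lemma inlP_fst : inlP V V' ≫ pullback.fst V.b V'.b = S.ι ≫ V.a := pullback.lift_fst _ _ _
@[simp] lemma inlP_snd : inlP V V' ≫ pullback.snd V.b V'.b = 0 := pullback.lift_snd _ _ _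
@[simp] lemma inrP_fst : inrP V V' ≫ pullback.fst V.b V'.b = 0 := pullback.lift_fst _ _ _
@[simp] lemma inrP_snd : inrP V V' ≫ pullback.snd V.b V'.b = S.ι ≫ V'.a :=
  pullback.lift_snd _ _ _

noncomputable def toDiff :
    pullback V.b V'.b ⟶ diffW S V.a V.b V'.a V'.b V.isVarExt.comm V'.isVarExt.comm :=
  cokernel.π _

instance : Epi (toDiff V V') := inferInstanceAs (Epi (cokernel.π _))

@[simp] lemma diffKer_toDiff : δK ≫ toDiff V V' = 0 := cokernel.condition _

noncomputable def descDiff {A : C} (p : pullback V.b V'.b ⟶ A) (hp : δK ≫ p = 0) :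
    diffW S V.a V.b V'.a V'.b V.isVarExt.comm V'.isVarExt.comm ⟶ A :=
  cokernel.desc _ p hp

@[simp] lemma toDiff_descDiff {A : C} (p : pullback V.b V'.b ⟶ A) (hp : δK ≫ p = 0) :
    toDiff V V' ≫ descDiff V V' p hp = p :=
  cokernel.π_desc _ _ _

lemma inlP_toDiff : inlP V V' ≫ toDiff V V' = δP := rfl

@[simp] lemma toDiff_diffQ : toDiff V V' ≫ δQ = pullback.fst V.b V'.b ≫ V.b ≫ S.ρ :=
  cokernel.π_desc _ _ _

lemma inrP_toDiff : inrP V V' ≫ toDiff V V' = -δP := by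
  have : inrP V V' = S.ι ≫ δK - inlP V V' := by ext <;> simp
  rw [this, Preadditive.sub_comp, assoc, diffKer_toDiff, comp_zero, zero_sub, inlP_toDiff]

lemma shortExact_inrP_fst :
    (ShortComplex.mk (inrP V V') (pullback.fst V.b V'.b) (inrP_fst V V')).ShortExact :=
  shortExact_pullback_fst V.b V'.isVarExt.se1

instance : Epi δQ := epi_of_epi_fac (toDiff_diffQ V V')

lemma exact_diff : (ShortComplex.mk δP δQ (diff_w _ _ _ _ _ _ _ _ _)).Exact := by
  refine exact_of_g_is_cokernel _ (CokernelCofork.IsColimit.ofπ' _ _ fun t ht => ?_)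
  have hu : inrP V V' ≫ toDiff V V' ≫ t = 0 := by
    rw [← assoc, inrP_toDiff, Preadditive.neg_comp, ht, neg_zero]
  let v := (shortExact_inrP_fst V V').exact.desc _ hu
  have hv : pullback.fst V.b V'.b ≫ v = toDiff V V' ≫ t :=
    (shortExact_inrP_fst V V').exact.g_desc _ hu
  have hav : V.a ≫ v = 0 := by
    rw [← diffKer_fst V V', assoc, hv, ← assoc, diffKer_toDiff, zero_comp]
  refine ⟨V.isVarExt.se2.exact.desc v hav, ?_⟩
  rw [← cancel_epi (toDiff V V'), ← hv]
  dsimp only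
  rw [← assoc, toDiff_diffQ, assoc, V.isVarExt.se2.exact.g_desc]

lemma exists_retraction_diffP_of_hom {m : V.W ⟶ V'.W} (ha : V.a ≫ m = V'.a)
    (hb : m ≫ V'.b = V.b) : ∃ r, δP ≫ r = 𝟙 S.P := by
  have hs : (pullback.fst V.b V'.b ≫ m - pullback.snd V.b V'.b) ≫ V'.b = 0 := by
    rw [Preadditive.sub_comp, assoc, hb, pullback.condition, sub_self]
  let p := V'.isVarExt.se1.exact.lift _ hs
  have hp : p ≫ S.ι ≫ V'.a = pullback.fst V.b V'.b ≫ m - pullback.snd V.b V'.b :=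
    V'.isVarExt.se1.exact.lift_f _ hs
  have hKp : δK ≫ p = 0 := by
    rw [← cancel_mono (S.ι ≫ V'.a), assoc, hp, zero_comp, Preadditive.comp_sub, ← assoc,
      diffKer_fst, diffKer_snd, ha, sub_self]
  refine ⟨descDiff V V' p hKp, ?_⟩
  rw [← inlP_toDiff, assoc, toDiff_descDiff, ← cancel_mono (S.ι ≫ V'.a), assoc, hp, id_comp,
    Preadditive.comp_sub, inlP_snd, sub_zero, ← assoc, inlP_fst, assoc, ha]

lemma exists_hom_of_retraction_diffP {r : diffW S V.a V.b V'.a V'.b V.isVarExt.comm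
    V'.isVarExt.comm ⟶ S.P} (hr : δP ≫ r = 𝟙 S.P) :
    ∃ m : V.W ⟶ V'.W, V.a ≫ m = V'.a ∧ m ≫ V'.b = V.b := by
  let t := pullback.snd V.b V'.b + toDiff V V' ≫ r ≫ S.ι ≫ V'.a
  have ht : inrP V V' ≫ t = 0 := by
    simp [t, reassoc_of% inrP_toDiff, reassoc_of% hr]
  let m := (shortExact_inrP_fst V V').exact.desc t ht
  have hm : pullback.fst V.b V'.b ≫ m = t := (shortExact_inrP_fst V V').exact.g_desc t ht
  refine ⟨m, ?_, ?_⟩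
  · rw [← diffKer_fst V V', assoc, hm]
    simp [t, reassoc_of% diffKer_toDiff]
  · rw [← cancel_epi (pullback.fst V.b V'.b), ← assoc, hm]
    simp [t, pullback.condition, V'.isVarExt.comm, reassoc_of% S.wF]

end VarExt

/-- Two variegated extensions `(W, a, b)` and `(W′, a′, b′)` of `𝐄` by `𝐅` are isomorphic
as variegated extensions if and only if their difference `W′ − W` is isomorphic, as an
extension of `Q` by `P`, to the split extension `0 → P → P ⊕ Q → Q → 0`. -/
theorem varext_iso_iff_diff_split (S : VarSetup C) (V V' : VarExt S) :
    VarDataIso S V.a V.b V'.a V'.b ↔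
      ExtDataIso
        (diffP S V.a V.b V'.a V'.b V.isVarExt.comm V'.isVarExt.comm V.isVarExt.w1)
        (diffQ S V.a V.b V'.a V'.b V.isVarExt.comm V'.isVarExt.comm V.isVarExt.w2)
        (biprod.inl : S.P ⟶ S.P ⊞ S.Q) (biprod.snd : S.P ⊞ S.Q ⟶ S.Q) := by
  rw [V.varDataIso_iff_exists_hom, extDataIso_biprod_iff_exists_retraction (V.exact_diff V')]
  exact ⟨fun ⟨_, ha, hb⟩ => V.exists_retraction_diffP_of_hom V' ha hb,
    fun ⟨_, hr⟩ => V.exists_hom_of_retraction_diffP V' hr⟩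
end
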